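/- arXiv:alg-geom/9702008 — 3 statements merged into one kernel-verified Lean document; each statement's English description precedes it below -/
import Mathlib

section
/- Let A₁, …, A_r be elements of M, let n₁, …, n_r be nonnegative integers, and let δ₁, …, δ_r be nonnegative integers. Assume that for each i either Aᵢ² ≥ 0, or Aᵢ² = −1 and nᵢ ≤ 1, and that Aᵢ·Aⱼ ≥ 0 for all i ≠ j. Then (Σᵢ nᵢAᵢ)² − Σᵢ nᵢAᵢ² + 2·Σᵢ nᵢδᵢ ≥ 0. -/
/-!
Expanding the square, `(Σ nᵢAᵢ)² = Σᵢ Σⱼ nᵢnⱼ Aᵢ·Aⱼ`. The off-diagonal terms are nonnegative, so the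
quantity is at least `Σᵢ (nᵢ² − nᵢ) Aᵢ² + 2 Σᵢ nᵢδᵢ`. Each `(nᵢ² − nᵢ) Aᵢ²` is nonnegative: `nᵢ² − nᵢ ≥ 0`
for a natural number, and it vanishes when `nᵢ ≤ 1`, which covers the case `Aᵢ² = −1`.
-/

open Finset

theorem LinearMap.apply_sum_zsmul_sum_zsmul {M ι : Type*} [AddCommGroup M] [Module ℤ M]
    (B : M →ₗ[ℤ] M →ₗ[ℤ] ℤ) (s : Finset ι) (c : ι → ℤ) (v : ι → M) :
    B (∑ i ∈ s, c i • v i) (∑ j ∈ s, c j • v j) = ∑ i ∈ s, ∑ j ∈ s, c i * c j * B (v i) (v j) := by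
  simp only [map_sum, LinearMap.map_smul_of_tower, sum_apply, LinearMap.coe_smul, Pi.smul_apply,
    smul_eq_mul]
  rw [sum_comm]
  exact sum_congr rfl fun i _ => sum_congr rfl fun j _ => by ring

theorem Finset.sum_diag_le_sum_sum {ι N : Type*} [AddCommMonoid N] [PartialOrder N]
    [IsOrderedAddMonoid N] (s : Finset ι) (f : ι → ι → N) (hf : ∀ i ∈ s, ∀ j ∈ s, i ≠ j → 0 ≤ f i j) :
    ∑ i ∈ s, f i i ≤ ∑ i ∈ s, ∑ j ∈ s, f i j := by
  classical
  refine sum_le_sum fun i hi => ?_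
  rw [← sum_erase_add s _ hi]
  exact le_add_of_nonneg_left <| sum_nonneg fun j hj =>
    hf i hi j (mem_of_mem_erase hj) (ne_of_mem_erase hj).symm

theorem mul_self_sub_self_mul_nonneg {n : ℕ} {a : ℤ} (h : 0 ≤ a ∨ (a = -1 ∧ n ≤ 1)) :
    0 ≤ ((n : ℤ) * n - n) * a := by
  rcases h with ha | ⟨-, hn⟩
  · have hn : 0 ≤ (n : ℤ) * n - n := by
      rcases n with _ | n
      · simp
      · push_cast; nlinarith
    exact mul_nonneg hn ha
  · interval_cases n <;> simp

theorem stmt1_general {M : Type*} [AddCommGroup M] [Module ℤ M]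
    (B : M →ₗ[ℤ] M →ₗ[ℤ] ℤ)
    (r : ℕ) (A : Fin r → M) (n : Fin r → ℕ) (δ : Fin r → ℕ)
    (hsq : ∀ i, 0 ≤ B (A i) (A i) ∨ (B (A i) (A i) = -1 ∧ n i ≤ 1))
    (hij : ∀ i j, i ≠ j → 0 ≤ B (A i) (A j)) :
    0 ≤ B (∑ i, (n i : ℤ) • A i) (∑ i, (n i : ℤ) • A i)
        - (∑ i, (n i : ℤ) * B (A i) (A i))
        + 2 * ∑ i, (n i : ℤ) * (δ i : ℤ) := by
  have hdiag : ∑ i, (n i : ℤ) * n i * B (A i) (A i) ≤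
      B (∑ i, (n i : ℤ) • A i) (∑ i, (n i : ℤ) • A i) := by
    rw [LinearMap.apply_sum_zsmul_sum_zsmul]
    refine sum_diag_le_sum_sum univ (fun i j => (n i : ℤ) * n j * B (A i) (A j))
      fun i _ j _ hne => ?_
    have := hij i j hne
    positivity
  have hself : 0 ≤ ∑ i, ((n i : ℤ) * n i - n i) * B (A i) (A i) :=
    sum_nonneg fun i _ => mul_self_sub_self_mul_nonneg (hsq i)
  have hδ : 0 ≤ ∑ i, (n i : ℤ) * (δ i : ℤ) := by positivity
  simp only [sub_mul, sum_sub_distrib] at hself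
  linarith

/-- Under the positivity assumptions on the classes `Aᵢ`
(either `Aᵢ² ≥ 0`, or `Aᵢ² = −1` and `nᵢ ≤ 1`; and `Aᵢ·Aⱼ ≥ 0` for `i ≠ j`),
the quantity `(Σ nᵢAᵢ)² − Σ nᵢAᵢ² + 2·Σ nᵢδᵢ` is nonnegative. -/
theorem stmt1 {M : Type*} [AddCommGroup M] [Module ℤ M]
    (B : M →ₗ[ℤ] M →ₗ[ℤ] ℤ) (hB : ∀ x y : M, B x y = B y x)
    (r : ℕ) (A : Fin r → M) (n : Fin r → ℕ) (δ : Fin r → ℕ)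
    (hsq : ∀ i, 0 ≤ B (A i) (A i) ∨ (B (A i) (A i) = -1 ∧ n i ≤ 1))
    (hij : ∀ i j, i ≠ j → 0 ≤ B (A i) (A j)) :
    0 ≤ B (∑ i, (n i : ℤ) • A i) (∑ i, (n i : ℤ) • A i)
        - (∑ i, (n i : ℤ) * B (A i) (A i))
        + 2 * ∑ i, (n i : ℤ) * (δ i : ℤ) :=
  stmt1_general B r A n δ hsq hij
end

section
/- For every positive integer m and every i ∈ {1, 2, 3}, the number of index-m subgroups of ℤ × ℤ that are contained in Λᵢ equals σ(m/2) if m is even, and equals 0 if m is odd. -/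
/-!
Every finite-index subgroup of `ℤ × ℤ` is spanned by the columns of a unique matrix
`[[a, b], [0, d]]` with `d > 0` and `0 ≤ b < a` (Hermite normal form), and its index is `a * d`.
Hence `ℤ × ℤ` has `∑_{a ∣ n} a = σ(n)` subgroups of index `n`. A subgroup `N` of index `k` is
itself the image of an injective endomorphism `f` of `ℤ × ℤ`, and `Λ ↦ f(Λ)` is a bijection
onto the subgroups contained in `N` that multiplies indices by `k`.
-/

/-- `Λ₁ = {(x,y) ∈ ℤ × ℤ : y is even}`. -/
def Lambda1 : AddSubgroup (ℤ × ℤ) where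
  carrier := {p : ℤ × ℤ | 2 ∣ p.2}
  zero_mem' := dvd_zero 2
  add_mem' := fun ha hb => dvd_add ha hb
  neg_mem' := fun ha => dvd_neg.mpr ha

/-- `Λ₂ = {(x,y) ∈ ℤ × ℤ : x is even}`. -/
def Lambda2 : AddSubgroup (ℤ × ℤ) where
  carrier := {p : ℤ × ℤ | 2 ∣ p.1}
  zero_mem' := dvd_zero 2
  add_mem' := fun ha hb => dvd_add ha hb
  neg_mem' := fun ha => dvd_neg.mpr ha

/-- `Λ₃ = {(x,y) ∈ ℤ × ℤ : x ≡ y (mod 2)}`. -/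
def Lambda3 : AddSubgroup (ℤ × ℤ) where
  carrier := {p : ℤ × ℤ | p.1 ≡ p.2 [ZMOD 2]}
  zero_mem' := Int.ModEq.refl 0
  add_mem' := fun ha hb => Int.ModEq.add ha hb
  neg_mem' := fun ha => Int.ModEq.neg ha

def upperTriHom (a b d : ℤ) : ℤ × ℤ →+ ℤ × ℤ where
  toFun p := (a * p.1 + b * p.2, d * p.2)
  map_zero' := by simp
  map_add' p q := by ext <;> simp only [Prod.fst_add, Prod.snd_add] <;> ring

@[simp]
lemma upperTriHom_apply (a b d : ℤ) (p : ℤ × ℤ) :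
    upperTriHom a b d p = (a * p.1 + b * p.2, d * p.2) := rfl

lemma upperTriHom_injective {a d : ℤ} (b : ℤ) (ha : a ≠ 0) (hd : d ≠ 0) :
    Function.Injective (upperTriHom a b d) := by
  refine (injective_iff_map_eq_zero _).mpr fun p hp => ?_
  simp only [upperTriHom_apply, Prod.ext_iff, Prod.fst_zero, Prod.snd_zero] at hp
  have hp₂ : p.2 = 0 := (mul_eq_zero.mp hp.2).resolve_left hd
  rw [hp₂, mul_zero, add_zero] at hp
  exact Prod.ext ((mul_eq_zero.mp hp.1).resolve_left ha) hp₂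

lemma range_upperTriHom_le_iff {a b d : ℤ} {H : AddSubgroup (ℤ × ℤ)} :
    (upperTriHom a b d).range ≤ H ↔ (a, 0) ∈ H ∧ (b, d) ∈ H := by
  refine ⟨fun h => ⟨h ⟨(1, 0), by simp⟩, h ⟨(0, 1), by simp⟩⟩, ?_⟩
  rintro ⟨h₁, h₂⟩ _ ⟨p, rfl⟩
  have : upperTriHom a b d p = p.1 • (a, 0) + p.2 • (b, d) := by
    ext <;> simp <;> ring
  rw [this]
  exact add_mem (zsmul_mem h₁ _) (zsmul_mem h₂ _)

lemma range_upperTriHom_add_mul (a b c d : ℤ) :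
    (upperTriHom a (b + a * c) d).range = (upperTriHom a b d).range := by
  exact le_antisymm (range_upperTriHom_le_iff.mpr ⟨⟨(1, 0), by simp⟩, ⟨(c, 1), by simp [add_comm]⟩⟩)
    (range_upperTriHom_le_iff.mpr ⟨⟨(1, 0), by simp⟩, ⟨(-c, 1), by simp⟩⟩)

lemma range_upperTriHom_one_zero (d : ℤ) :
    (upperTriHom 1 0 d).range = (AddSubgroup.zmultiples d).comap (AddMonoidHom.snd ℤ ℤ) := by
  ext p
  simp only [AddMonoidHom.mem_range, AddSubgroup.mem_comap, AddMonoidHom.coe_snd,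
    Int.mem_zmultiples_iff, upperTriHom_apply, Prod.ext_iff, Prod.exists]
  refine ⟨fun ⟨x, y, _, hy⟩ => ⟨y, hy.symm⟩, fun ⟨y, hy⟩ => ⟨p.1, y, by simp, hy.symm⟩⟩

lemma range_upperTriHom_of_snd_one (a b : ℤ) :
    (upperTriHom a b 1).range =
      (AddSubgroup.zmultiples a).comap (AddMonoidHom.fst ℤ ℤ - b • AddMonoidHom.snd ℤ ℤ) := by
  ext p
  simp only [AddMonoidHom.mem_range, AddSubgroup.mem_comap, AddMonoidHom.sub_apply,
    AddMonoidHom.smul_apply, AddMonoidHom.coe_fst, AddMonoidHom.coe_snd, smul_eq_mul,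
    Int.mem_zmultiples_iff, upperTriHom_apply, Prod.ext_iff, Prod.exists, one_mul]
  refine ⟨fun ⟨x, y, hx, hy⟩ => ⟨x, by rw [← hx, ← hy]; ring⟩,
    fun ⟨x, hx⟩ => ⟨x, p.2, by rw [← hx]; ring, rfl⟩⟩

lemma index_range_upperTriHom (a b : ℤ) {d : ℤ} (hd : d ≠ 0) :
    (upperTriHom a b d).range.index = (a * d).natAbs := by
  have hcomp : upperTriHom a b d = (upperTriHom 1 0 d).comp (upperTriHom a b 1) := by
    ext p <;> simp
  have hsurj : Function.Surjective (AddMonoidHom.fst ℤ ℤ - b • AddMonoidHom.snd ℤ ℤ) :=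
    fun x => ⟨(x, 0), by simp⟩
  rw [hcomp, ← AddMonoidHom.map_range,
    AddSubgroup.index_map_of_injective _ (upperTriHom_injective 0 one_ne_zero hd),
    range_upperTriHom_of_snd_one, range_upperTriHom_one_zero,
    AddSubgroup.index_comap_of_surjective _ hsurj,
    AddSubgroup.index_comap_of_surjective _ Prod.snd_surjective,
    Int.index_zmultiples, Int.index_zmultiples, Int.natAbs_mul]

lemma Int.exists_addSubgroup_eq_zmultiples_natCast (H : AddSubgroup ℤ) :
    ∃ n : ℕ, H = AddSubgroup.zmultiples (n : ℤ) := by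
  obtain ⟨a, rfl⟩ := Int.subgroup_cyclic H
  exact ⟨a.natAbs, by rw [Int.zmultiples_natAbs, AddSubgroup.zmultiples_eq_closure]⟩

lemma exists_range_upperTriHom_eq {H : AddSubgroup (ℤ × ℤ)} (hH : H.index ≠ 0) :
    ∃ a b d : ℕ, b < a ∧ 0 < d ∧ H = (upperTriHom a b d).range := by
  obtain ⟨a, ha⟩ := Int.exists_addSubgroup_eq_zmultiples_natCast (H.comap (AddMonoidHom.inl ℤ ℤ))
  obtain ⟨d, hd⟩ := Int.exists_addSubgroup_eq_zmultiples_natCast (H.map (AddMonoidHom.snd ℤ ℤ))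
  have mem_fst : ∀ x : ℤ, (x, 0) ∈ H ↔ (a : ℤ) ∣ x := fun x => by
    rw [← Int.mem_zmultiples_iff, ← ha]; rfl
  have mem_snd : ∀ y : ℤ, (∃ x, (x, y) ∈ H) ↔ (d : ℤ) ∣ y := fun y => by
    rw [← Int.mem_zmultiples_iff, ← hd]; simp
  have ha₀ : 0 < a := by
    have := (mem_fst _).mp (by simpa using H.nsmul_index_mem (1, 0))
    exact Nat.pos_of_dvd_of_pos (Int.natCast_dvd_natCast.mp this) (Nat.pos_of_ne_zero hH)
  have hd₀ : 0 < d := by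
    have := (mem_snd _).mp ⟨0, by simpa using H.nsmul_index_mem (0, 1)⟩
    exact Nat.pos_of_dvd_of_pos (Int.natCast_dvd_natCast.mp this) (Nat.pos_of_ne_zero hH)
  obtain ⟨c, hc⟩ := (mem_snd d).mpr dvd_rfl
  have hHc : H = (upperTriHom a c d).range := by
    refine le_antisymm (fun p hp => ?_) (range_upperTriHom_le_iff.mpr ⟨(mem_fst a).mpr dvd_rfl, hc⟩)
    obtain ⟨k, hk⟩ := (mem_snd p.2).mp ⟨p.1, hp⟩
    have hsub : (p.1 - k * c, 0) ∈ H := by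
      convert sub_mem hp (zsmul_mem hc k) using 1
      ext <;> simp [hk, mul_comm]
    obtain ⟨l, hl⟩ := (mem_fst _).mp hsub
    exact ⟨(l, k), by ext <;> simp <;> linarith⟩
  have hc₀ : 0 ≤ c % a := Int.emod_nonneg _ (by omega)
  have hca : c % a < a := Int.emod_lt_of_pos _ (by omega)
  refine ⟨a, (c % a).toNat, d, by omega, hd₀, ?_⟩
  rw [hHc, Int.toNat_of_nonneg hc₀, ← range_upperTriHom_add_mul a (c % a) (c / a) d,
    Int.emod_add_mul_ediv]

lemma dvd_of_range_upperTriHom_le {a b d a' b' d' : ℤ} (hd' : d' ≠ 0)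
    (h : (upperTriHom a b d).range ≤ (upperTriHom a' b' d').range) : a' ∣ a ∧ d' ∣ d := by
  obtain ⟨⟨⟨x, y⟩, hxy⟩, ⟨⟨u, v⟩, huv⟩⟩ := range_upperTriHom_le_iff.mp h
  simp only [upperTriHom_apply, Prod.ext_iff] at hxy huv
  have hy : y = 0 := (mul_eq_zero.mp hxy.2).resolve_left hd'
  exact ⟨⟨x, by rw [← hxy.1, hy]; ring⟩, ⟨v, huv.2.symm⟩⟩

lemma eq_of_range_upperTriHom_eq {a b d a' b' d' : ℕ} (hb : b < a) (hb' : b' < a') (hd : 0 < d)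
    (hd' : 0 < d') (h : (upperTriHom a b d).range = (upperTriHom a' b' d').range) :
    a = a' ∧ b = b' ∧ d = d' := by
  have h₁ := dvd_of_range_upperTriHom_le (by omega) h.le
  have h₂ := dvd_of_range_upperTriHom_le (by omega) h.ge
  obtain rfl : a = a' := Nat.dvd_antisymm (by exact_mod_cast h₂.1) (by exact_mod_cast h₁.1)
  obtain rfl : d = d' := Nat.dvd_antisymm (by exact_mod_cast h₂.2) (by exact_mod_cast h₁.2)
  obtain ⟨⟨x, y⟩, hxy⟩ := (range_upperTriHom_le_iff.mp h.le).2
  simp only [upperTriHom_apply, Prod.ext_iff] at hxy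
  have hy : y = 1 := by
    have : (d : ℤ) * y = d * 1 := by rw [hxy.2, mul_one]
    exact mul_left_cancel₀ (by omega) this
  have hmod : (b : ℤ) % a = b' % a := by
    rw [← hxy.1, hy, mul_one, Int.mul_add_emod_self_left]
  rw [Int.emod_eq_of_lt (by omega) (by omega), Int.emod_eq_of_lt (by omega) (by omega)] at hmod
  exact ⟨rfl, by exact_mod_cast hmod, rfl⟩

lemma ncard_setOf_index_eq (n : ℕ) (hn : 0 < n) :
    {H : AddSubgroup (ℤ × ℤ) | H.index = n}.ncard = ∑ a ∈ n.divisors, a := by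
  classical
  let S : Finset (Σ _ : ℕ, ℕ) := n.divisors.sigma fun a => Finset.range a
  let F : (Σ _ : ℕ, ℕ) → AddSubgroup (ℤ × ℤ) := fun p => (upperTriHom p.1 p.2 (n / p.1 : ℕ)).range
  have mem_S : ∀ p : Σ _ : ℕ, ℕ, p ∈ S ↔ p.1 ∣ n ∧ p.2 < p.1 := fun p => by
    simp [S, hn.ne']
  have hS : ∀ p ∈ S, p.2 < p.1 ∧ 0 < n / p.1 ∧ p.1 * (n / p.1) = n := fun p hp => by
    obtain ⟨hdvd, hb⟩ := (mem_S p).mp hp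
    exact ⟨hb, Nat.div_pos (Nat.le_of_dvd hn hdvd) (by omega), Nat.mul_div_cancel' hdvd⟩
  have hinj : Set.InjOn F S := by
    rintro ⟨a, b⟩ hab ⟨a', b'⟩ hab' hF
    obtain ⟨hb, hd, -⟩ := hS _ hab
    obtain ⟨hb', hd', -⟩ := hS _ hab'
    obtain ⟨rfl, rfl, -⟩ := eq_of_range_upperTriHom_eq hb hb' hd hd' hF
    rfl
  have hset : {H : AddSubgroup (ℤ × ℤ) | H.index = n} = S.image F := by
    ext H
    simp only [Set.mem_ofPred_eq, Finset.coe_image, Set.mem_image, Finset.mem_coe]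
    constructor
    · rintro hH
      obtain ⟨a, b, d, hb, hd, rfl⟩ := exists_range_upperTriHom_eq (hH ▸ hn.ne')
      have had : a * d = n := by
        rw [← hH, index_range_upperTriHom _ _ (by omega), Int.natAbs_mul, Int.natAbs_natCast,
          Int.natAbs_natCast]
      refine ⟨⟨a, b⟩, (mem_S _).mpr ⟨⟨d, had.symm⟩, hb⟩, ?_⟩
      simp only [F, ← had, Nat.mul_div_cancel_left _ (show 0 < a by omega)]
    · rintro ⟨p, hp, rfl⟩
      obtain ⟨-, hd, had⟩ := hS p hp
      rwa [index_range_upperTriHom _ _ (by omega), Int.natAbs_mul, Int.natAbs_natCast,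
        Int.natAbs_natCast]
  rw [hset, Set.ncard_coe_finset, Finset.card_image_of_injOn hinj, Finset.card_sigma]
  simp

lemma image_map_setOf_index_mul {G G' : Type*} [AddGroup G] [AddGroup G'] {f : G →+ G'}
    (hf : Function.Injective f) (m : ℕ) :
    AddSubgroup.map f '' {H | H.index * f.range.index = m} = {K | K.index = m ∧ K ≤ f.range} := by
  ext K
  constructor
  · rintro ⟨H, hH, rfl⟩
    exact ⟨by rw [AddSubgroup.index_map_of_injective _ hf]; exact hH, AddSubgroup.map_le_range f H⟩
  · rintro ⟨hK, hle⟩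
    refine ⟨K.comap f, ?_, AddSubgroup.map_comap_eq_self hle⟩
    rw [Set.mem_ofPred_eq, ← hK, ← AddSubgroup.index_map_of_injective _ hf,
      AddSubgroup.map_comap_eq_self hle]

lemma ncard_setOf_index_eq_and_le {N : AddSubgroup (ℤ × ℤ)} (hN : N.index ≠ 0) {m : ℕ}
    (hm : 0 < m) :
    {Λ : AddSubgroup (ℤ × ℤ) | Λ.index = m ∧ Λ ≤ N}.ncard =
      if N.index ∣ m then ∑ a ∈ (m / N.index).divisors, a else 0 := by
  obtain ⟨a, b, d, hb, hd, rfl⟩ := exists_range_upperTriHom_eq hN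
  have hf := upperTriHom_injective (b : ℤ) (a := a) (d := d) (by omega) (by omega)
  rw [← image_map_setOf_index_mul hf, Set.ncard_image_of_injective _ (AddSubgroup.map_injective hf)]
  split_ifs with hdvd
  · obtain ⟨j, hj⟩ := hdvd
    have hset : {H : AddSubgroup (ℤ × ℤ) | H.index * (upperTriHom a b d).range.index = m} =
        {H | H.index = j} := by
      ext H
      rw [Set.mem_ofPred_eq, Set.mem_ofPred_eq, hj, mul_comm _ j, Nat.mul_left_inj hN]
    rw [hset, hj, Nat.mul_div_cancel_left _ (Nat.pos_of_ne_zero hN)]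
    exact ncard_setOf_index_eq j (Nat.pos_of_mul_pos_left (hj ▸ hm))
  · convert Set.ncard_empty (AddSubgroup (ℤ × ℤ))
    exact Set.eq_empty_of_forall_notMem fun H hH => hdvd ⟨H.index, by rw [← hH, mul_comm]⟩

lemma index_Lambda1 : Lambda1.index = 2 :=
  AddSubgroup.index_eq_two_iff.mpr ⟨(0, 1), fun p => by
    change Xor (2 ∣ p.2 + 1) (2 ∣ p.2)
    rw [xor_iff_not_iff]; omega⟩

lemma index_Lambda2 : Lambda2.index = 2 :=
  AddSubgroup.index_eq_two_iff.mpr ⟨(1, 0), fun p => by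
    change Xor (2 ∣ p.1 + 1) (2 ∣ p.1)
    rw [xor_iff_not_iff]; omega⟩

lemma index_Lambda3 : Lambda3.index = 2 :=
  AddSubgroup.index_eq_two_iff.mpr ⟨(1, 0), fun p => by
    change Xor (p.1 + 1 ≡ p.2 + 0 [ZMOD 2]) (p.1 ≡ p.2 [ZMOD 2])
    rw [xor_iff_not_iff, Int.ModEq, Int.ModEq]; omega⟩

/-- For every positive integer `m` and each of the three index-2
subgroups `Λᵢ`, the number of index-`m` subgroups of `ℤ × ℤ` contained in `Λᵢ`
equals `σ(m/2)` if `m` is even, and `0` if `m` is odd. -/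
theorem stmt5 (m : ℕ) (hm : 0 < m)
    (N : AddSubgroup (ℤ × ℤ)) (hN : N ∈ ({Lambda1, Lambda2, Lambda3} : Set (AddSubgroup (ℤ × ℤ)))) :
    Set.ncard {Λ : AddSubgroup (ℤ × ℤ) | Λ.index = m ∧ Λ ≤ N}
      = if 2 ∣ m then ∑ a ∈ (m / 2).divisors, a else 0 := by
  have hN₂ : N.index = 2 := by
    rcases hN with rfl | rfl | rfl
    exacts [index_Lambda1, index_Lambda2, index_Lambda3]
  rw [ncard_setOf_index_eq_and_le (by omega) hm, hN₂]
end

section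
/- For every positive integer m and every i ∈ {1, 2, 3}, the number of index-m subgroups of ℤ × ℤ that are contained in Λᵢ but not contained in Λⱼ for either j ≠ i equals σ(m/2) − σ(m/4) (with σ(m/2) = 0 if m is odd and σ(m/4) = 0 if 4 does not divide m). -/
/-- The three index-2 subgroups, indexed by `Fin 3`. -/
def L : Fin 3 → AddSubgroup (ℤ × ℤ) := ![Lambda1, Lambda2, Lambda3]

open AddSubgroup
open scoped ArithmeticFunction.sigma

lemma Nat.div_ne_zero_of_dvd {n a : ℕ} (hn : n ≠ 0) (ha : a ∣ n) : n / a ≠ 0 :=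
  (Nat.div_ne_zero_iff_of_dvd ha).2 ⟨hn, ne_zero_of_dvd_ne_zero hn ha⟩

lemma Int.exists_pos_mem_iff_dvd_of_index_ne_zero {H : AddSubgroup ℤ} (h : H.index ≠ 0) :
    ∃ a : ℕ, 0 < a ∧ ∀ x : ℤ, x ∈ H ↔ (a : ℤ) ∣ x := by
  obtain ⟨g, rfl⟩ := Int.subgroup_cyclic H
  rw [← zmultiples_eq_closure, Int.index_zmultiples] at *
  exact ⟨g.natAbs, Nat.pos_of_ne_zero h, fun x => by
    rw [Int.mem_zmultiples_iff, Int.natCast_natAbs, abs_dvd]⟩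

lemma AddSubgroup.ncard_setOf_le_range_index_eq {G G' : Type*} [AddGroup G] [AddGroup G']
    {f : G →+ G'} (hf : Function.Injective f) (m : ℕ) :
    {Λ : AddSubgroup G' | Λ ≤ f.range ∧ Λ.index = m}.ncard =
      {K : AddSubgroup G | K.index * f.range.index = m}.ncard := by
  have : {Λ : AddSubgroup G' | Λ ≤ f.range ∧ Λ.index = m} =
      map f '' {K : AddSubgroup G | K.index * f.range.index = m} := by
    ext Λ
    constructor
    · rintro ⟨hle, rfl⟩
      exact ⟨comap f Λ, by
        rw [Set.mem_ofPred_eq, ← index_map_of_injective _ hf, map_comap_eq_self hle],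
        map_comap_eq_self hle⟩
    · rintro ⟨K, hK, rfl⟩
      exact ⟨map_le_range f K, (index_map_of_injective _ hf).trans hK⟩
  rw [this, Set.ncard_image_of_injective _ (map_injective hf)]

def hnfMap (a c d : ℕ) : ℤ × ℤ →+ ℤ × ℤ :=
  AddMonoidHom.mk' (fun p => (a * p.1 + c * p.2, d * p.2)) fun p q => by
    ext <;> simp <;> ring

def hnfLattice (a c d : ℕ) : AddSubgroup (ℤ × ℤ) := (hnfMap a c d).range

lemma hnfMap_injective {a c d : ℕ} (ha : a ≠ 0) (hd : d ≠ 0) :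
    Function.Injective (hnfMap a c d) := by
  rintro ⟨x, y⟩ ⟨x', y'⟩ h
  simp only [hnfMap, AddMonoidHom.mk'_apply, Prod.mk.injEq] at h
  obtain rfl : y = y' := mul_left_cancel₀ (by exact_mod_cast hd) h.2
  simpa using mul_left_cancel₀ (by exact_mod_cast ha : (a : ℤ) ≠ 0) (add_right_cancel h.1)

lemma mem_hnfLattice {a c d : ℕ} (hd : d ≠ 0) {p : ℤ × ℤ} :
    p ∈ hnfLattice a c d ↔ (d : ℤ) ∣ p.2 ∧ (a * d : ℤ) ∣ p.1 * d - c * p.2 := by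
  obtain ⟨u, v⟩ := p
  simp only [hnfLattice, hnfMap, AddMonoidHom.mem_range, AddMonoidHom.mk'_apply, Prod.mk.injEq,
    Prod.exists]
  constructor
  · rintro ⟨x, y, rfl, rfl⟩
    exact ⟨dvd_mul_right _ _, ⟨x, by ring⟩⟩
  · rintro ⟨⟨y, rfl⟩, hdiv⟩
    have : (a : ℤ) ∣ u - c * y := by
      rw [← mul_dvd_mul_iff_right (by exact_mod_cast hd : (d : ℤ) ≠ 0)]
      rwa [show (u - c * y) * d = u * d - c * (d * y) by ring]
    obtain ⟨x, hx⟩ := this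
    exact ⟨x, y, by linarith, rfl⟩

lemma hnfLattice_le_iff {a c d : ℕ} {H : AddSubgroup (ℤ × ℤ)} :
    hnfLattice a c d ≤ H ↔ ((a : ℤ), 0) ∈ H ∧ ((c : ℤ), (d : ℤ)) ∈ H := by
  constructor
  · intro h
    exact ⟨h ⟨(1, 0), by simp [hnfMap]⟩, h ⟨(0, 1), by simp [hnfMap]⟩⟩
  · rintro ⟨h1, h2⟩ _ ⟨⟨x, y⟩, rfl⟩
    have : hnfMap a c d (x, y) = x • ((a : ℤ), (0 : ℤ)) + y • ((c : ℤ), (d : ℤ)) := by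
      ext <;> simp [hnfMap] <;> ring
    rw [this]
    exact add_mem (zsmul_mem h1 x) (zsmul_mem h2 y)

lemma index_hnfLattice (a c : ℕ) {d : ℕ} (hd : d ≠ 0) : (hnfLattice a c d).index = a * d := by
  have hcomp : hnfMap a c d = (hnfMap 1 c d).comp (hnfMap a 0 1) := by
    ext p <;> simp [hnfMap]
  have h1 : hnfLattice a 0 1 = (zmultiples (a : ℤ)).prod ⊤ := by
    ext ⟨u, v⟩
    simp [mem_hnfLattice one_ne_zero, Int.mem_zmultiples_iff, mem_prod]
  have h2 : hnfLattice 1 c d = (⊤ : AddSubgroup ℤ).prod (zmultiples (d : ℤ)) := by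
    ext ⟨u, v⟩
    simp only [mem_hnfLattice hd, mem_prod, mem_top, true_and, Int.mem_zmultiples_iff,
      Nat.cast_one, one_mul]
    exact ⟨And.left, fun h => ⟨h, by obtain ⟨k, rfl⟩ := h; exact ⟨u - c * k, by ring⟩⟩⟩
  rw [hnfLattice, hcomp, AddMonoidHom.range_comp,
    index_map_of_injective _ (hnfMap_injective one_ne_zero hd), ← hnfLattice, ← hnfLattice, h1, h2,
    index_prod, index_prod]
  simp [Int.index_zmultiples]

lemma eq_hnfLattice_of_mem {Λ : AddSubgroup (ℤ × ℤ)} {a c d : ℕ} (hd : d ≠ 0)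
    (hx : ∀ x : ℤ, (x, 0) ∈ Λ ↔ (a : ℤ) ∣ x) (hy : ∀ p ∈ Λ, (d : ℤ) ∣ p.2)
    (hcd : ((c : ℤ), (d : ℤ)) ∈ Λ) : Λ = hnfLattice a c d := by
  refine le_antisymm (fun p hp => ?_) (hnfLattice_le_iff.2 ⟨(hx a).2 dvd_rfl, hcd⟩)
  obtain ⟨k, hk⟩ := hy p hp
  have hrow : (p.1 - c * k, (0 : ℤ)) ∈ Λ := by
    convert sub_mem hp (zsmul_mem hcd k) using 1
    ext <;> simp [hk] <;> ring
  obtain ⟨l, hl⟩ := (hx _).1 hrow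
  rw [mem_hnfLattice hd, hk]
  exact ⟨dvd_mul_right _ _, ⟨l, by linear_combination (d : ℤ) * hl⟩⟩

lemma exists_eq_hnfLattice {Λ : AddSubgroup (ℤ × ℤ)} (h : Λ.index ≠ 0) :
    ∃ a c d : ℕ, 0 < a ∧ 0 < d ∧ c < a ∧ Λ = hnfLattice a c d := by
  have : Λ.FiniteIndex := ⟨h⟩
  obtain ⟨a, ha, hx⟩ := Int.exists_pos_mem_iff_dvd_of_index_ne_zero
    (H := Λ.comap (AddMonoidHom.inl ℤ ℤ)) (by rw [index_comap]; exact FiniteIndex.index_ne_zero)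
  obtain ⟨d, hd, hy⟩ := Int.exists_pos_mem_iff_dvd_of_index_ne_zero
    (H := Λ.map (AddMonoidHom.snd ℤ ℤ))
    (ne_zero_of_dvd_ne_zero h (index_map_dvd _ Prod.snd_surjective))
  obtain ⟨⟨c₀, _⟩, hc₀, rfl⟩ := (hy d).2 dvd_rfl
  have hc : ((c₀ % a).toNat : ℤ) = c₀ % a :=
    Int.toNat_of_nonneg (Int.emod_nonneg _ (by positivity))
  have hca : (c₀ % a).toNat < a := by
    have := Int.emod_lt_of_pos c₀ (by omega : (0 : ℤ) < a)
    omega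
  refine ⟨a, (c₀ % a).toNat, d, ha, hd, hca,
    eq_hnfLattice_of_mem hd.ne' hx (fun p hp => (hy _).1 ⟨p, hp, rfl⟩) ?_⟩
  rw [hc]
  convert sub_mem hc₀ (zsmul_mem ((hx a).2 dvd_rfl) (c₀ / a)) using 1
  ext <;> simp [Int.emod_def, mul_comm]

lemma hnfLattice_inj {a c d a' c' d' : ℕ} (hd : d ≠ 0) (hc : c < a) (hd' : d' ≠ 0)
    (hc' : c' < a') (h : hnfLattice a c d = hnfLattice a' c' d') : a = a' ∧ c = c' ∧ d = d' := by
  have h₁ := hnfLattice_le_iff.1 h.ge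
  have h₂ := hnfLattice_le_iff.1 h.le
  simp only [mem_hnfLattice hd, mem_hnfLattice hd', mul_zero, sub_zero] at h₁ h₂
  obtain rfl : d = d' :=
    Nat.dvd_antisymm (Int.natCast_dvd_natCast.1 h₁.2.1) (Int.natCast_dvd_natCast.1 h₂.2.1)
  have hd₀ : (d : ℤ) ≠ 0 := by exact_mod_cast hd
  obtain rfl : a = a' := Nat.dvd_antisymm
    (Int.natCast_dvd_natCast.1 ((mul_dvd_mul_iff_right hd₀).1 h₁.1.2))
    (Int.natCast_dvd_natCast.1 ((mul_dvd_mul_iff_right hd₀).1 h₂.1.2))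
  have hcc : (a : ℤ) ∣ c' - c := by
    rw [← mul_dvd_mul_iff_right hd₀, sub_mul]
    exact h₁.2.2
  have := Int.eq_zero_of_abs_lt_dvd hcc (by rw [abs_lt]; omega)
  exact ⟨rfl, by omega, rfl⟩

lemma setOf_index_eq_image {n : ℕ} (hn : n ≠ 0) :
    {Λ : AddSubgroup (ℤ × ℤ) | Λ.index = n} =
      (fun x : Σ _ : ℕ, ℕ => hnfLattice x.1 x.2 (n / x.1)) ''
        ↑(n.divisors.sigma Finset.range) := by
  ext Λ
  simp only [Set.mem_image, Finset.coe_sigma, Set.mem_sigma_iff, Finset.mem_coe,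
    Nat.mem_divisors, Finset.mem_range, Sigma.exists]
  constructor
  · rintro rfl
    obtain ⟨a, c, d, ha, hd, hc, rfl⟩ := exists_eq_hnfLattice hn
    rw [index_hnfLattice a c hd.ne'] at hn ⊢
    exact ⟨a, c, ⟨⟨dvd_mul_right a d, hn⟩, hc⟩, by rw [Nat.mul_div_cancel_left d ha]⟩
  · rintro ⟨a, c, ⟨⟨ha, -⟩, -⟩, rfl⟩
    rw [Set.mem_ofPred_eq, index_hnfLattice a c (Nat.div_ne_zero_of_dvd hn ha),
      Nat.mul_div_cancel' ha]

lemma injOn_hnfLattice (n : ℕ) :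
    Set.InjOn (fun x : Σ _ : ℕ, ℕ => hnfLattice x.1 x.2 (n / x.1))
      ↑(n.divisors.sigma Finset.range) := by
  rintro ⟨a, c⟩ hx ⟨a', c'⟩ hy h
  simp only [Finset.coe_sigma, Set.mem_sigma_iff, Finset.mem_coe, Nat.mem_divisors,
    Finset.mem_range] at hx hy
  obtain ⟨rfl, rfl, -⟩ := hnfLattice_inj (Nat.div_ne_zero_of_dvd hx.1.2 hx.1.1) hx.2
    (Nat.div_ne_zero_of_dvd hy.1.2 hy.1.1) hy.2 h
  rfl

lemma ncard_setOf_index_eq_s10 {n : ℕ} (hn : n ≠ 0) :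
    {Λ : AddSubgroup (ℤ × ℤ) | Λ.index = n}.ncard = σ 1 n := by
  rw [setOf_index_eq_image hn, (injOn_hnfLattice n).ncard_image, Set.ncard_coe_finset,
    Finset.card_sigma, ArithmeticFunction.sigma_one_apply]
  simp

lemma finite_setOf_index_eq {n : ℕ} (hn : n ≠ 0) :
    {Λ : AddSubgroup (ℤ × ℤ) | Λ.index = n}.Finite := by
  rw [setOf_index_eq_image hn]
  exact Set.Finite.image _ (Finset.finite_toSet _)

lemma ncard_setOf_le_index_eq {H : AddSubgroup (ℤ × ℤ)} (hH : H.index ≠ 0) {m : ℕ}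
    (hm : m ≠ 0) :
    {Λ | Λ ≤ H ∧ Λ.index = m}.ncard = if H.index ∣ m then σ 1 (m / H.index) else 0 := by
  obtain ⟨a, c, d, ha, hd, -, rfl⟩ := exists_eq_hnfLattice hH
  rw [hnfLattice, ncard_setOf_le_range_index_eq (hnfMap_injective ha.ne' hd.ne'), ← hnfLattice]
  split_ifs with hdvd
  · obtain ⟨q, rfl⟩ := hdvd
    rw [Nat.mul_div_cancel_left _ (Nat.pos_of_ne_zero hH),
      ← ncard_setOf_index_eq_s10 (right_ne_zero_of_mul hm)]
    simp_rw [mul_comm _ q, Nat.mul_left_inj hH]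
  · convert Set.ncard_empty (AddSubgroup (ℤ × ℤ))
    exact Set.eq_empty_of_forall_notMem fun K hK => hdvd ⟨K.index, by rw [← hK.out, mul_comm]⟩

lemma L_inf_L_eq {i j : Fin 3} (hij : i ≠ j) : L i ⊓ L j = hnfLattice 2 0 2 := by
  fin_cases i <;> fin_cases j <;> first | exact absurd rfl hij | skip
  all_goals
    ext ⟨u, v⟩
    simp [L, Lambda1, Lambda2, Lambda3, mem_hnfLattice two_ne_zero, Int.modEq_iff_dvd]
    omega

lemma hnfLattice_two_zero_two_le_L (i : Fin 3) : hnfLattice 2 0 2 ≤ L i := by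
  obtain ⟨j, hj⟩ := exists_ne i
  rw [← L_inf_L_eq hj.symm]
  exact inf_le_left

lemma index_L (i : Fin 3) : (L i).index = 2 := by
  rw [index_eq_two_iff]
  fin_cases i
  · exact ⟨(0, 1), fun p => by simp [L, Lambda1, xor_iff_not_iff]; omega⟩
  · exact ⟨(1, 0), fun p => by simp [L, Lambda2, xor_iff_not_iff]; omega⟩
  · exact ⟨(1, 0), fun p => by simp [L, Lambda3, Int.modEq_iff_dvd, xor_iff_not_iff]; omega⟩

lemma forall_ne_not_le_L_iff {Λ : AddSubgroup (ℤ × ℤ)} {i : Fin 3} (h : Λ ≤ L i) :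
    (∀ j, j ≠ i → ¬ Λ ≤ L j) ↔ ¬ Λ ≤ hnfLattice 2 0 2 := by
  refine ⟨fun hL h2 => ?_, fun h2 j hj hj' => h2 ?_⟩
  · obtain ⟨j, hj⟩ := exists_ne i
    exact hL j hj (h2.trans (hnfLattice_two_zero_two_le_L j))
  · rw [← L_inf_L_eq hj.symm]
    exact le_inf h hj'

/-- For every positive integer `m` and every `i ∈ {1,2,3}`, the
number of index-`m` subgroups of `ℤ × ℤ` contained in `Λᵢ` but in neither `Λⱼ`
with `j ≠ i` equals `σ(m/2) − σ(m/4)` (with the convention `σ(m/k) = 0`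
when `k ∤ m`). -/
theorem stmt10 (m : ℕ) (hm : 0 < m) (i : Fin 3) :
    (Set.ncard {Λ : AddSubgroup (ℤ × ℤ) | Λ.index = m ∧ Λ ≤ L i ∧
        ∀ j : Fin 3, j ≠ i → ¬ Λ ≤ L j} : ℤ)
      = (if 2 ∣ m then ∑ a ∈ (m / 2).divisors, (a : ℤ) else 0)
        - (if 4 ∣ m then ∑ a ∈ (m / 4).divisors, (a : ℤ) else 0) := by
  set A := {Λ : AddSubgroup (ℤ × ℤ) | Λ ≤ L i ∧ Λ.index = m}
  set B := {Λ : AddSubgroup (ℤ × ℤ) | Λ ≤ hnfLattice 2 0 2 ∧ Λ.index = m}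
  have hset : {Λ : AddSubgroup (ℤ × ℤ) | Λ.index = m ∧ Λ ≤ L i ∧ ∀ j, j ≠ i → ¬ Λ ≤ L j} =
      A \ B := by
    ext Λ
    by_cases h : Λ ≤ L i
    · simp only [A, B, Set.mem_sdiff, Set.mem_ofPred_eq, h, forall_ne_not_le_L_iff h, true_and,
        not_and]
      tauto
    · simp [A, h]
  have hBA : B ⊆ A := fun Λ h => ⟨h.1.trans (hnfLattice_two_zero_two_le_L i), h.2⟩
  have hA : A.Finite := (finite_setOf_index_eq hm.ne').subset fun _ h => h.2
  rw [hset, Set.ncard_sdiff hBA (hA.subset hBA), Nat.cast_sub (Set.ncard_le_ncard hBA hA),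
    ncard_setOf_le_index_eq (by simp [index_L]) hm.ne',
    ncard_setOf_le_index_eq (by simp [index_hnfLattice]) hm.ne', index_L,
    index_hnfLattice 2 0 two_ne_zero]
  push_cast [ArithmeticFunction.sigma_one_apply]
  norm_num
end
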